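/- Let E be a directed graph and let {(H_α,S_α)}_α and {(H_β,S_β)}_β be families of admissible pairs with suprema (H₁,S₁) and (H₂,S₂) respectively in 𝒯_E. Then ⋁_{α,β} ((H_α,S_α) ∧ (H_β,S_β)) = (H₁,S₁) ∧ (H₂,S₂). In particular the lattice 𝒯_E of admissible pairs of E is distributive. -/
import Mathlib


/-- A directed graph: vertices, edges, and source/range maps. -/
structure DGraph where
  V : Type
  E : Type
  src : E → V
  rng : E → V

namespace DGraph

variable (G : DGraph)

/-- A subset of vertices is hereditary if ranges of edges emitted from it stay in it. -/
def Hereditary (H : Set G.V) : Prop := ∀ e : G.E, G.src e ∈ H → G.rng e ∈ H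

/-- A vertex is regular if it emits a nonzero finite number of edges. -/
def Regular (v : G.V) : Prop :=
  {e : G.E | G.src e = v}.Finite ∧ {e : G.E | G.src e = v}.Nonempty

/-- A vertex is singular if it is a sink or an infinite emitter. -/
def Singular (v : G.V) : Prop := ¬ Regular G v

/-- A vertex emitting infinitely many edges. -/
def InfEmitter (v : G.V) : Prop := {e : G.E | G.src e = v}.Infinite

/-- A subset is saturated if it contains every regular vertex all of whose
emitted edges have range in the subset. -/
def Saturated (H : Set G.V) : Prop :=
  ∀ v : G.V, Regular G v → (∀ e : G.E, G.src e = v → G.rng e ∈ H) → v ∈ H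

/-- A breaking vertex for a hereditary set `H`. -/
def Breaking (H : Set G.V) (v : G.V) : Prop :=
  InfEmitter G v ∧ v ∉ H ∧
    {e : G.E | G.src e = v ∧ G.rng e ∉ H}.Finite ∧
    {e : G.E | G.src e = v ∧ G.rng e ∉ H}.Nonempty

/-- `X` contains `H`, is hereditary saturated, and absorbs vertices of `S`
all of whose emitted edges have range in `X`. -/
def SClosed (H S X : Set G.V) : Prop :=
  H ⊆ X ∧ Hereditary G X ∧ Saturated G X ∧
    ∀ v ∈ S, (∀ e : G.E, G.src e = v → G.rng e ∈ X) → v ∈ X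

/-- The `S`-saturation of `H`: the smallest `SClosed` set. -/
def SSat (H S : Set G.V) : Set G.V := ⋂₀ {X | SClosed G H S X}

end DGraph

namespace DGraph

variable (G : DGraph)

/-- An admissible pair: a hereditary saturated set of vertices together with a
set of breaking vertices for it. -/
structure APair (G : DGraph) where
  H : Set G.V
  S : Set G.V
  hered : Hereditary G H
  sat : Saturated G H
  brk : ∀ v ∈ S, Breaking G H v

/-- The order on admissible pairs: `(H₁,S₁) ≤ (H₂,S₂)` iff `H₁ ⊆ H₂` and `S₁ ⊆ H₂ ∪ S₂`. -/
def APle (P Q : APair G) : Prop := P.H ⊆ Q.H ∧ P.S ⊆ Q.H ∪ Q.S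

end DGraph

namespace DGraph

/-- `Q` is the least upper bound of the family `P` of admissible pairs. -/
def IsSupFam {ι : Type} (G : DGraph) (P : ι → APair G) (Q : APair G) : Prop :=
  (∀ i, APle G (P i) Q) ∧ ∀ R : APair G, (∀ i, APle G (P i) R) → APle G Q R

end DGraph

namespace DGraph

/-- `Q` is the greatest lower bound of the admissible pairs `P₁` and `P₂`. -/
def IsInfPair (G : DGraph) (P₁ P₂ Q : APair G) : Prop :=
  APle G Q P₁ ∧ APle G Q P₂ ∧
    ∀ R : APair G, APle G R P₁ → APle G R P₂ → APle G R Q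

end DGraph

namespace DGraph

variable {G : DGraph}

/-- One-step reachability. -/
def Step (G : DGraph) (v w : G.V) : Prop := ∃ e : G.E, G.src e = v ∧ G.rng e = w

lemma hered_reach {X : Set G.V} (hX : Hereditary G X)
    {v u : G.V} (h : Relation.ReflTransGen (Step G) v u) (hv : v ∈ X) : u ∈ X := by
  induction h with
  | refl => exact hv
  | tail _ hstep ih =>
    obtain ⟨e, he, hr⟩ := hstep
    exact hr ▸ hX e (he ▸ ih)

lemma aple_trans {P Q R : APair G} (h1 : APle G P Q) (h2 : APle G Q R) : APle G P R :=
  ⟨h1.1.trans h2.1, fun v hv => (h1.2 hv).elim (fun h => Or.inl (h2.1 h)) (fun h => h2.2 h)⟩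

/-- breaking for intersection, left version. -/
lemma breaking_inter_left (P₁ P₂ : APair G) {v : G.V} (h1 : v ∈ P₁.S)
    (h2 : v ∈ P₂.H ∪ P₂.S) : Breaking G (P₁.H ∩ P₂.H) v := by
  obtain ⟨hinf, hnot, hfin, hne⟩ := P₁.brk v h1
  refine ⟨hinf, fun h => hnot h.1, ?_, ?_⟩
  · rcases h2 with h2 | h2
    · refine hfin.subset ?_
      rintro e ⟨hs, hr⟩
      refine ⟨hs, fun hH1 => hr ⟨hH1, P₂.hered e (hs ▸ h2)⟩⟩
    · obtain ⟨_, _, hfin2, _⟩ := P₂.brk v h2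
      refine (hfin.union hfin2).subset ?_
      rintro e ⟨hs, hr⟩
      by_cases hH1 : G.rng e ∈ P₁.H
      · exact Or.inr ⟨hs, fun hH2 => hr ⟨hH1, hH2⟩⟩
      · exact Or.inl ⟨hs, hH1⟩
  · obtain ⟨e, hs, hr⟩ := hne
    exact ⟨e, hs, fun h => hr h.1⟩

/-- The explicit meet of two admissible pairs. -/
lemma meet_pair (P₁ P₂ : APair G) : ∃ Qm : APair G,
    Qm.H = P₁.H ∩ P₂.H ∧ (P₁.H ∪ P₁.S) ∩ (P₂.H ∪ P₂.S) ⊆ Qm.H ∪ Qm.S ∧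
    APle G Qm P₁ ∧ APle G Qm P₂ := by
  refine ⟨⟨P₁.H ∩ P₂.H, ((P₁.H ∪ P₁.S) ∩ (P₂.H ∪ P₂.S)) \ (P₁.H ∩ P₂.H),
    fun e h => ⟨P₁.hered e h.1, P₂.hered e h.2⟩,
    fun v hreg hall => ⟨P₁.sat v hreg (fun e he => (hall e he).1),
      P₂.sat v hreg (fun e he => (hall e he).2)⟩, ?_⟩, rfl, ?_, ?_, ?_⟩
  · rintro v ⟨⟨hv1, hv2⟩, hvnot⟩
    rcases hv1 with hv1 | hv1
    · rcases hv2 with hv2 | hv2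
      · exact absurd ⟨hv1, hv2⟩ hvnot
      · rw [Set.inter_comm]
        exact breaking_inter_left P₂ P₁ hv2 (Or.inl hv1)
    · exact breaking_inter_left P₁ P₂ hv1 hv2
  · intro v hv
    by_cases h : v ∈ P₁.H ∩ P₂.H
    · exact Or.inl h
    · exact Or.inr ⟨hv, h⟩
  · exact ⟨Set.inter_subset_left, fun v hv => hv.1.1⟩
  · exact ⟨Set.inter_subset_right, fun v hv => hv.1.2⟩

lemma sclosed_ssat (H S : Set G.V) : SClosed G H S (SSat G H S) := by
  refine ⟨fun v hv => Set.mem_sInter.2 fun X hX => hX.1 hv,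
    fun e he => Set.mem_sInter.2 fun X hX => hX.2.1 e (Set.mem_sInter.1 he X hX),
    fun v hreg hall => Set.mem_sInter.2 fun X hX =>
      hX.2.2.1 v hreg (fun e he' => Set.mem_sInter.1 (hall e he') X hX),
    fun v hv hall => Set.mem_sInter.2 fun X hX =>
      hX.2.2.2 v hv (fun e he' => Set.mem_sInter.1 (hall e he') X hX)⟩

lemma ssat_subset {H S X : Set G.V} (hX : SClosed G H S X) : SSat G H S ⊆ X :=
  Set.sInter_subset_of_mem hX

/-- Facts about a supremum of a family. -/
lemma sup_facts {ι : Type} (P : ι → APair G) (Q : APair G) (hQ : IsSupFam G P Q) :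
    (∀ X : Set G.V, SClosed G (⋃ i, (P i).H) (⋃ i, (P i).S) X → Q.H ⊆ X) ∧
    Q.S ⊆ Q.H ∪ ⋃ i, (P i).S := by
  set HU : Set G.V := ⋃ i, (P i).H with hHU
  set SU : Set G.V := ⋃ i, (P i).S with hSU
  have hss := sclosed_ssat (G := G) HU SU
  -- the canonical supremum pair
  have hCP : ∀ v ∈ SU \ SSat G HU SU, Breaking G (SSat G HU SU) v := by
    rintro v ⟨hvS, hvns⟩
    obtain ⟨i, hvi⟩ := Set.mem_iUnion.1 hvS
    obtain ⟨hinf, _, hfin, _⟩ := (P i).brk v hvi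
    refine ⟨hinf, hvns, ?_, ?_⟩
    · refine hfin.subset ?_
      rintro e ⟨hs, hr⟩
      exact ⟨hs, fun h => hr (hss.1 (Set.mem_iUnion.2 ⟨i, h⟩))⟩
    · by_contra hemp
      apply hvns
      refine hss.2.2.2 v hvS (fun e he => ?_)
      by_contra hre
      exact hemp ⟨e, he, hre⟩
  let CP : APair G := ⟨SSat G HU SU, SU \ SSat G HU SU, hss.2.1, hss.2.2.1, hCP⟩
  have hub : ∀ i, APle G (P i) CP := by
    intro i
    refine ⟨fun v hv => hss.1 (Set.mem_iUnion.2 ⟨i, hv⟩), fun v hv => ?_⟩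
    by_cases h : v ∈ SSat G HU SU
    · exact Or.inl h
    · exact Or.inr ⟨Set.mem_iUnion.2 ⟨i, hv⟩, h⟩
  have hle : APle G Q CP := hQ.2 CP hub
  have hQHcl : SClosed G HU SU Q.H := by
    refine ⟨fun v hv => ?_, Q.hered, Q.sat, fun v hv hall => ?_⟩
    · obtain ⟨i, hvi⟩ := Set.mem_iUnion.1 hv
      exact (hQ.1 i).1 hvi
    · obtain ⟨i, hvi⟩ := Set.mem_iUnion.1 hv
      rcases (hQ.1 i).2 hvi with h | h
      · exact h
      · obtain ⟨_, _, _, e, hs, hr⟩ := Q.brk v h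
        exact absurd (hall e hs) hr
  constructor
  · intro X hX
    exact (hle.1.trans (ssat_subset hX))
  · intro v hv
    rcases hle.2 hv with h | h
    · exact Or.inl (ssat_subset hQHcl h)
    · exact Or.inr h.1

/-- The key auxiliary set. -/
def ZSet (G : DGraph) (C R : APair G) : Set G.V :=
  {w | ∀ u, Relation.ReflTransGen (Step G) w u →
    (u ∈ C.H → u ∈ R.H) ∧ (u ∈ C.S → u ∈ R.H ∪ R.S)}

lemma zset_reach {C R : APair G} {w u : G.V} (hw : w ∈ ZSet G C R)
    (h : Relation.ReflTransGen (Step G) w u) : u ∈ ZSet G C R :=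
  fun u' h' => hw u' (h.trans h')

lemma zset_sclosed {ι : Type} (P : ι → APair G) (C R : APair G)
    (hHH : ∀ i, (P i).H ∩ C.H ⊆ R.H)
    (hmix : ∀ i, ((P i).H ∪ (P i).S) ∩ (C.H ∪ C.S) ⊆ R.H ∪ R.S) :
    SClosed G (⋃ i, (P i).H) (⋃ i, (P i).S) (ZSet G C R) := by
  refine ⟨?_, ?_, ?_, ?_⟩
  · intro v hv
    obtain ⟨i, hvi⟩ := Set.mem_iUnion.1 hv
    intro u hreach
    have hui : u ∈ (P i).H := hered_reach (P i).hered hreach hvi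
    exact ⟨fun hC => hHH i ⟨hui, hC⟩, fun hC => hmix i ⟨Or.inl hui, Or.inr hC⟩⟩
  · intro e he
    exact zset_reach he (Relation.ReflTransGen.single ⟨e, rfl, rfl⟩)
  · intro v hreg hall
    intro u hreach
    rcases hreach.cases_head with heq | ⟨c, ⟨e, hs, hr⟩, hrest⟩
    · subst heq
      constructor
      · intro hvC
        refine R.sat v hreg (fun e he => ?_)
        exact (hall e he (G.rng e) Relation.ReflTransGen.refl).1 (C.hered e (by rw [he]; exact hvC))
      · intro hvS
        exact absurd hreg.1 ((C.brk v hvS).1)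
    · exact (hr ▸ hall e hs) u hrest
  · intro v hv hall
    obtain ⟨i, hvi⟩ := Set.mem_iUnion.1 hv
    intro u hreach
    rcases hreach.cases_head with heq | ⟨c, ⟨e, hs, hr⟩, hrest⟩
    · subst heq
      constructor
      · intro hvC
        rcases hmix i ⟨Or.inr hvi, Or.inl hvC⟩ with h | h
        · exact h
        · obtain ⟨_, _, _, e, hs, hrn⟩ := R.brk v h
          exact absurd ((hall e hs (G.rng e) Relation.ReflTransGen.refl).1 (C.hered e (by rw [hs]; exact hvC))) hrn
      · intro hvS
        exact hmix i ⟨Or.inr hvi, Or.inr hvS⟩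
    · exact (hr ▸ hall e hs) u hrest

end DGraph

/-- if `Q₁` and `Q₂` are the suprema of two families of admissible
pairs, then the meet of `Q₁` and `Q₂` is the supremum of the family of pairwise
meets; i.e. the lattice of admissible pairs is distributive over arbitrary joins. -/
theorem sup_of_meets_eq_meet_of_sups (G : DGraph) {ι₁ ι₂ : Type}
    (A : ι₁ → DGraph.APair G) (B : ι₂ → DGraph.APair G)
    (Q₁ Q₂ : DGraph.APair G)
    (h₁ : DGraph.IsSupFam G A Q₁) (h₂ : DGraph.IsSupFam G B Q₂)
    (M : ι₁ → ι₂ → DGraph.APair G)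
    (hM : ∀ α β, DGraph.IsInfPair G (A α) (B β) (M α β))
    (Q : DGraph.APair G) (hQ : DGraph.IsInfPair G Q₁ Q₂ Q) :
    DGraph.IsSupFam G (fun p : ι₁ × ι₂ => M p.1 p.2) Q := by
  constructor
  · rintro ⟨α, β⟩
    exact hQ.2.2 (M α β) (DGraph.aple_trans (hM α β).1 (h₁.1 α))
      (DGraph.aple_trans (hM α β).2.1 (h₂.1 β))
  · intro R hR
    have G1 : ∀ α β, (A α).H ∩ (B β).H ⊆ R.H := by
      intro α β x hx
      obtain ⟨Qm, hH, hS, hl1, hl2⟩ := DGraph.meet_pair (A α) (B β)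
      have hQmM := (hM α β).2.2 Qm hl1 hl2
      exact (hR (α, β)).1 (hQmM.1 (hH ▸ hx))
    have G2 : ∀ α β, ((A α).H ∪ (A α).S) ∩ ((B β).H ∪ (B β).S) ⊆ R.H ∪ R.S := by
      intro α β x hx
      obtain ⟨Qm, hH, hS, hl1, hl2⟩ := DGraph.meet_pair (A α) (B β)
      have hQmM := (hM α β).2.2 Qm hl1 hl2
      have hMR := hR (α, β)
      rcases hS hx with h | h
      · exact Or.inl (hMR.1 (hQmM.1 h))
      · rcases hQmM.2 h with h' | h'
        · exact Or.inl (hMR.1 h')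
        · rcases hMR.2 h' with h'' | h''
          · exact Or.inl h''
          · exact Or.inr h''
    have SF1 := DGraph.sup_facts A Q₁ h₁
    have SF2 := DGraph.sup_facts B Q₂ h₂
    have hZ : ∀ β, Q₁.H ⊆ DGraph.ZSet G (B β) R :=
      fun β => SF1.1 _ (DGraph.zset_sclosed A (B β) R (fun α => G1 α β) (fun α => G2 α β))
    have hZ' : ∀ α, Q₂.H ⊆ DGraph.ZSet G (A α) R :=
      fun α => SF2.1 _ (DGraph.zset_sclosed B (A α) R
        (fun β x hx => G1 α β ⟨hx.2, hx.1⟩) (fun β x hx => G2 α β ⟨hx.2, hx.1⟩))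
    have hW : DGraph.SClosed G (⋃ β, (B β).H) (⋃ β, (B β).S)
        {v | ∀ u, Relation.ReflTransGen (DGraph.Step G) v u →
          (∀ β, u ∈ DGraph.ZSet G (B β) R) → u ∈ R.H} := by
      refine ⟨?_, ?_, ?_, ?_⟩
      · intro v hv
        obtain ⟨β, hvβ⟩ := Set.mem_iUnion.1 hv
        intro u hreach hZu
        exact (hZu β u Relation.ReflTransGen.refl).1 (DGraph.hered_reach (B β).hered hreach hvβ)
      · intro e he u hreach hZu
        exact he u ((Relation.ReflTransGen.single ⟨e, rfl, rfl⟩).trans hreach) hZu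
      · intro v hreg hall u hreach hZu
        rcases hreach.cases_head with heq | ⟨c, ⟨e, hs, hr⟩, hrest⟩
        · subst heq
          refine R.sat v hreg (fun e he => ?_)
          exact hall e he (G.rng e) Relation.ReflTransGen.refl
            (fun β => DGraph.zset_reach (hZu β) (Relation.ReflTransGen.single ⟨e, he, rfl⟩))
        · exact (hr ▸ hall e hs) u hrest hZu
      · intro v hv hall u hreach hZu
        obtain ⟨β, hvβ⟩ := Set.mem_iUnion.1 hv
        rcases hreach.cases_head with heq | ⟨c, ⟨e, hs, hr⟩, hrest⟩
        · subst heq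
          rcases (hZu β v Relation.ReflTransGen.refl).2 hvβ with h | h
          · exact h
          · obtain ⟨_, _, _, e, hs, hrn⟩ := R.brk v h
            exact absurd (hall e hs (G.rng e) Relation.ReflTransGen.refl
              (fun β' => DGraph.zset_reach (hZu β')
                (Relation.ReflTransGen.single ⟨e, hs, rfl⟩))) hrn
        · exact (hr ▸ hall e hs) u hrest hZu
    have part1 : Q₁.H ∩ Q₂.H ⊆ R.H := by
      intro v hv
      exact SF2.1 _ hW hv.2 v Relation.ReflTransGen.refl (fun β => hZ β hv.1)
    constructor
    · exact fun v hv => part1 ⟨hQ.1.1 hv, hQ.2.1.1 hv⟩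
    · intro v hv
      have hv1 : v ∈ Q₁.H ∨ ∃ α, v ∈ (A α).S := by
        rcases hQ.1.2 hv with h | h
        · exact Or.inl h
        · rcases SF1.2 h with h' | h'
          · exact Or.inl h'
          · exact Or.inr (Set.mem_iUnion.1 h')
      have hv2 : v ∈ Q₂.H ∨ ∃ β, v ∈ (B β).S := by
        rcases hQ.2.1.2 hv with h | h
        · exact Or.inl h
        · rcases SF2.2 h with h' | h'
          · exact Or.inl h'
          · exact Or.inr (Set.mem_iUnion.1 h')
      rcases hv1 with h1 | ⟨α, h1⟩ <;> rcases hv2 with h2 | ⟨β, h2⟩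
      · exact Or.inl (part1 ⟨h1, h2⟩)
      · exact (hZ β h1 v Relation.ReflTransGen.refl).2 h2
      · exact (hZ' α h2 v Relation.ReflTransGen.refl).2 h1
      · exact G2 α β ⟨Or.inr h1, Or.inr h2⟩
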